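/- arXiv:1904.01462 — 2 statements merged into one kernel-verified Lean document; each statement's English description precedes it below -/
import Mathlib

section
/- Let n ∈ ℕ and let a : Fin n → Fin n → ℝ. In Cl_n set w = ∑_{i<j} (a i j) • (eᵢ * eⱼ). Then w * w = (-(∑_{i<j} (a i j)^2)) • 1 + ∑_{i<j<k<l} (2 * (a i j * a k l + a i l * a j k - a i k * a j l)) • (eᵢ * eⱼ * e_k * e_l). (This is the coordinate form of the identity ω·ω = -‖ω‖² + ω∧ω for a 2-form ω identified with an element of the Clifford algebra, Lemma 'dx²' of the paper.) -/
open scoped BigOperators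

/-- The negative-definite quadratic form `Q v = -∑ i, (v i)^2` on `EuclideanSpace ℝ (Fin n)`. -/
noncomputable def Q (n : ℕ) : QuadraticForm ℝ (EuclideanSpace ℝ (Fin n)) :=
  QuadraticMap.ofPolar (fun v => -∑ i, v i ^ 2)
    (fun a v => by
      simp only [PiLp.smul_apply, smul_eq_mul, mul_pow]
      rw [← Finset.mul_sum]
      ring)
    (fun x x' y => by
      have h : ∀ (u w : EuclideanSpace ℝ (Fin n)),
          QuadraticMap.polar (fun v : EuclideanSpace ℝ (Fin n) => -∑ i, v i ^ 2) u w
            = -(2 * ∑ i, u i * w i) := by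
        intro u w
        have hsq : ∀ i, (u i + w i) ^ 2 = u i ^ 2 + w i ^ 2 + 2 * (u i * w i) := fun i => by ring
        simp_rw [QuadraticMap.polar, PiLp.add_apply, hsq, Finset.sum_add_distrib,
          ← Finset.mul_sum]
        ring
      simp_rw [h, PiLp.add_apply, add_mul, Finset.sum_add_distrib]
      ring)
    (fun a x y => by
      have h : ∀ (u w : EuclideanSpace ℝ (Fin n)),
          QuadraticMap.polar (fun v : EuclideanSpace ℝ (Fin n) => -∑ i, v i ^ 2) u w
            = -(2 * ∑ i, u i * w i) := by
        intro u w
        have hsq : ∀ i, (u i + w i) ^ 2 = u i ^ 2 + w i ^ 2 + 2 * (u i * w i) := fun i => by ring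
        simp_rw [QuadraticMap.polar, PiLp.add_apply, hsq, Finset.sum_add_distrib,
          ← Finset.mul_sum]
        ring
      simp_rw [h, PiLp.smul_apply, smul_eq_mul, mul_assoc, ← Finset.mul_sum]
      ring)

/-- The image in the Clifford algebra `Cl_n` of the `i`-th standard basis vector. -/
noncomputable def e {n : ℕ} (i : Fin n) : CliffordAlgebra (Q n) :=
  CliffordAlgebra.ι (Q n) (EuclideanSpace.single i 1)


open CliffordAlgebra Finset

lemma Q_single {n : ℕ} (i : Fin n) : Q n (EuclideanSpace.single i 1) = -1 := by
  show -∑ x : Fin n, (EuclideanSpace.single i 1 : EuclideanSpace ℝ (Fin n)) x ^ 2 = -1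
  simp [EuclideanSpace.single_apply, apply_ite (· ^ (2:ℕ))]

lemma e_sq {n : ℕ} (i : Fin n) : e i * e i = -1 := by
  rw [e, ι_sq_scalar, Q_single, map_neg, map_one]

lemma e_swap {n : ℕ} {i j : Fin n} (h : i ≠ j) : e i * e j = -(e j * e i) := by
  have := ι_mul_ι_add_swap (Q := Q n) (EuclideanSpace.single i 1) (EuclideanSpace.single j 1)
  have hp : QuadraticMap.polar (Q n) (EuclideanSpace.single i 1) (EuclideanSpace.single j 1) = 0 := by
    show QuadraticMap.polar (fun v : EuclideanSpace ℝ (Fin n) => -∑ x, v x ^ 2) _ _ = 0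
    simp [QuadraticMap.polar, EuclideanSpace.single_apply, apply_ite (· ^ (2:ℕ)),
      Finset.sum_ite_eq, h, add_sq, Finset.sum_add_distrib, Finset.sum_ite_eq',
      (Ne.symm h)]
  rw [hp, map_zero] at this
  exact eq_neg_of_add_eq_zero_left this

section sums
variable {n : ℕ} {M : Type*} [AddCommMonoid M]

lemma sum_ioi (i : Fin n) (g : Fin n → M) :
    ∑ j : Fin n, (if i < j then g j else 0) = ∑ j ∈ Finset.Ioi i, g j := by
  rw [← Finset.sum_filter]
  congr 1
  ext x; simp

lemma sum_pairs (f : Fin n → Fin n → M) :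
    ∑ p ∈ Finset.univ.filter (fun p : Fin n × Fin n => p.1 < p.2), f p.1 p.2
      = ∑ i : Fin n, ∑ j ∈ Finset.Ioi i, f i j := by
  rw [Finset.sum_filter, Fintype.sum_prod_type]
  exact Finset.sum_congr rfl fun i _ => sum_ioi i _

lemma sum_quads (f : Fin n → Fin n → Fin n → Fin n → M) :
    ∑ t ∈ Finset.univ.filter
        (fun t : (Fin n × Fin n) × Fin n × Fin n =>
          t.1.1 < t.1.2 ∧ t.1.2 < t.2.1 ∧ t.2.1 < t.2.2),
        f t.1.1 t.1.2 t.2.1 t.2.2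
      = ∑ i : Fin n, ∑ j ∈ Finset.Ioi i, ∑ k ∈ Finset.Ioi j, ∑ l ∈ Finset.Ioi k, f i j k l := by
  rw [Finset.sum_filter, Fintype.sum_prod_type]
  simp only [Fintype.sum_prod_type, ite_and, Finset.sum_ite_irrel, Finset.sum_const_zero]
  simp only [sum_ioi]

end sums

section cliff
variable {n : ℕ}

lemma e_swap' {i j : Fin n} (h : i ≠ j) (t : CliffordAlgebra (Q n)) :
    e i * (e j * t) = -(e j * (e i * t)) := by
  rw [← mul_assoc, e_swap h, neg_mul, mul_assoc]

lemma e_sq' (i : Fin n) (t : CliffordAlgebra (Q n)) : e i * (e i * t) = -t := by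
  rw [← mul_assoc, e_sq, neg_one_mul]

lemma share_aa {i j l : Fin n} (hji : j ≠ i) (hli : l ≠ i) (hjl : j ≠ l) :
    e i * (e j * (e i * e l)) = -(e i * (e l * (e i * e j))) := by
  rw [e_swap' hji.symm, e_sq' i (e l), e_swap' hli.symm, e_sq' i (e j)]
  simp only [mul_neg, neg_neg]
  rw [e_swap hjl]

lemma share_ba {i j l : Fin n} (hij : i ≠ j) (hil : i ≠ l) (hjl : j ≠ l) :
    e i * (e j * (e j * e l)) = -(e j * (e l * (e i * e j))) := by
  rw [e_sq' j (e l), e_swap' hil.symm (e j)]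
  simp only [mul_neg, neg_neg]
  rw [e_swap hjl.symm]
  simp only [mul_neg, neg_neg]
  rw [e_swap' hij.symm (e j * e l), e_sq' j (e l)]
  simp only [mul_neg, neg_neg]

lemma share_ab {i j k : Fin n} (hki : k ≠ i) (hij : i ≠ j) (hkj : k ≠ j) :
    e i * (e j * (e k * e i)) = -(e k * (e i * (e i * e j))) := by
  rw [e_swap hki, e_sq' i (e j)]
  simp only [mul_neg, neg_neg]
  rw [e_swap' hij (e i * e k), e_sq' i (e k)]
  simp only [mul_neg, neg_neg]
  rw [e_swap hkj]

lemma share_bb {i j k : Fin n} (hij : i ≠ j) (hkj : k ≠ j) (hik : i ≠ k) :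
    e i * (e j * (e k * e j)) = -(e k * (e j * (e i * e j))) := by
  rw [e_swap hkj, e_swap hij]
  simp only [mul_neg, neg_neg]
  rw [e_sq' j (e k), e_sq' j (e i)]
  simp only [mul_neg, neg_neg]
  rw [e_swap hik]

lemma sgn_klij {i j k l : Fin n} (hli : l ≠ i) (hlj : l ≠ j) (hki : k ≠ i) (hkj : k ≠ j) :
    e k * (e l * (e i * e j)) = e i * (e j * (e k * e l)) := by
  rw [e_swap' hli, e_swap hlj]
  simp only [mul_neg, neg_neg]
  rw [e_swap' hki (e j * e l), e_swap' hkj (e l)]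
  simp only [mul_neg, neg_neg]

lemma sgn_ikjl {i j k l : Fin n} (hkj : k ≠ j) :
    e i * (e k * (e j * e l)) = -(e i * (e j * (e k * e l))) := by
  rw [e_swap' hkj (e l), mul_neg]

lemma sgn_jlik {i j k l : Fin n} (hli : l ≠ i) (hji : j ≠ i) (hlk : l ≠ k) :
    e j * (e l * (e i * e k)) = -(e i * (e j * (e k * e l))) := by
  rw [e_swap' hli]
  simp only [mul_neg, neg_neg]
  rw [e_swap' hji (e l * e k), e_swap hlk]
  simp only [mul_neg, neg_neg]

lemma sgn_jkil {i j k l : Fin n} (hki : k ≠ i) (hji : j ≠ i) :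
    e j * (e k * (e i * e l)) = e i * (e j * (e k * e l)) := by
  rw [e_swap' hki]
  simp only [mul_neg, neg_neg]
  rw [e_swap' hji (e k * e l)]
  simp only [mul_neg, neg_neg]

lemma sgn_iljk {i j k l : Fin n} (hlj : l ≠ j) (hlk : l ≠ k) :
    e i * (e l * (e j * e k)) = e i * (e j * (e k * e l)) := by
  rw [e_swap' hlj]
  simp only [mul_neg, neg_neg]
  rw [e_swap hlk]
  simp only [mul_neg, neg_neg]

end cliff

section main
variable {n : ℕ}

open Finset

private def Pr (n : ℕ) : Finset (Fin n × Fin n) := univ.filter (fun p => p.1 < p.2)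

private def dcond (t : (Fin n × Fin n) × Fin n × Fin n) : Prop :=
  t.1.1 ≠ t.2.1 ∧ t.1.1 ≠ t.2.2 ∧ t.1.2 ≠ t.2.1 ∧ t.1.2 ≠ t.2.2

instance : DecidablePred (dcond (n := n)) := fun t => by unfold dcond; infer_instance

private lemma pair_sq {i j : Fin n} (h : i ≠ j) :
    e i * e j * (e i * e j) = (-1 : CliffordAlgebra (Q n)) := by
  simp only [mul_assoc]
  rw [e_swap' h.symm (e j), e_sq]
  simp [mul_neg, e_sq]

private lemma diag_part (a : Fin n → Fin n → ℝ) :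
    ∑ t ∈ (Pr n ×ˢ Pr n).filter (fun t => t.1 = t.2),
        (a t.1.1 t.1.2 * a t.2.1 t.2.2) • (e t.1.1 * e t.1.2 * (e t.2.1 * e t.2.2))
      = (-(∑ i : Fin n, ∑ j ∈ Finset.Ioi i, (a i j) ^ 2)) • (1 : CliffordAlgebra (Q n)) := by
  have h1 : ∑ t ∈ (Pr n ×ˢ Pr n).filter (fun t => t.1 = t.2),
      (a t.1.1 t.1.2 * a t.2.1 t.2.2) • (e t.1.1 * e t.1.2 * (e t.2.1 * e t.2.2))
      = ∑ p ∈ Pr n, (-(a p.1 p.2 ^ 2)) • (1 : CliffordAlgebra (Q n)) := by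
    refine Finset.sum_nbij' Prod.fst (fun p => (p, p)) ?_ ?_ ?_ ?_ ?_
    · intro t ht
      simp only [Finset.mem_filter, Finset.mem_product] at ht
      exact ht.1.1
    · intro p hp
      simp only [Finset.mem_filter, Finset.mem_product]
      exact ⟨⟨hp, hp⟩, trivial⟩
    · intro t ht
      simp only [Finset.mem_filter, Finset.mem_product] at ht
      exact Prod.ext rfl ht.2
    · intro p _; rfl
    · intro t ht
      simp only [Finset.mem_filter, Finset.mem_product, Pr, Finset.mem_univ, true_and] at ht
      obtain ⟨⟨hp, -⟩, heq⟩ := ht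
      rw [← heq, pair_sq (ne_of_lt hp), smul_neg, ← neg_smul, ← sq]
  rw [h1, ← Finset.sum_smul]
  congr 1
  unfold Pr
  rw [sum_pairs (fun i j => -(a i j ^ 2))]
  simp [Finset.sum_neg_distrib]


private lemma Eshare {p q : Fin n × Fin n} (hp : p.1 < p.2) (hq : q.1 < q.2)
    (hne : p ≠ q) (hnd : ¬ dcond (p, q)) :
    (e p.1 * e p.2) * (e q.1 * e q.2) = -((e q.1 * e q.2) * (e p.1 * e p.2)) := by
  obtain ⟨i, j⟩ := p; obtain ⟨k, l⟩ := q
  simp only at hp hq ⊢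
  have hcases : i = k ∨ i = l ∨ j = k ∨ j = l := by
    by_contra hcon
    push_neg at hcon
    exact hnd ⟨hcon.1, hcon.2.1, hcon.2.2.1, hcon.2.2.2⟩
  simp only [mul_assoc]
  rcases hcases with h | h | h | h
  · subst h
    have hjl : j ≠ l := by rintro rfl; exact hne rfl
    exact share_aa hp.ne' hq.ne' hjl
  · subst h
    exact share_ab hq.ne hp.ne (hq.trans hp).ne
  · subst h
    exact share_ba hp.ne (hp.trans hq).ne hq.ne
  · subst h
    have hik : i ≠ k := fun hh => hne (by rw [hh])
    exact share_bb hp.ne hq.ne hik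

private lemma share_part (a : Fin n → Fin n → ℝ) :
    ∑ t ∈ ((Pr n ×ˢ Pr n).filter (fun t => ¬ t.1 = t.2)).filter (fun t => ¬ dcond t),
        (a t.1.1 t.1.2 * a t.2.1 t.2.2) • (e t.1.1 * e t.1.2 * (e t.2.1 * e t.2.2))
      = 0 := by
  refine Finset.sum_involution (fun t _ => (t.2, t.1)) ?_ ?_ ?_ ?_
  · intro t ht
    simp only [Finset.mem_filter, Finset.mem_product, Pr, Finset.mem_univ, true_and] at ht
    obtain ⟨⟨⟨hp, hq⟩, hne⟩, hnd⟩ := ht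
    have key := Eshare hp hq hne hnd
    simp only
    rw [key, smul_neg, mul_comm (a t.2.1 t.2.2) (a t.1.1 t.1.2)]
    exact neg_add_cancel _
  · intro t ht _ h
    simp only [Finset.mem_filter] at ht
    exact ht.1.2 (congrArg Prod.fst h).symm
  · intro t ht
    simp only [Finset.mem_filter, Finset.mem_product, Pr, Finset.mem_univ, true_and] at ht ⊢
    obtain ⟨⟨⟨hp, hq⟩, hne⟩, hnd⟩ := ht
    refine ⟨⟨⟨hq, hp⟩, fun h => hne h.symm⟩, fun h => hnd ?_⟩
    unfold dcond at h ⊢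
    tauto
  · intro t ht
    rfl


private lemma disjoint_part (a : Fin n → Fin n → ℝ) :
    ∑ t ∈ ((Pr n ×ˢ Pr n).filter (fun t => ¬ t.1 = t.2)).filter (fun t => dcond t),
        (a t.1.1 t.1.2 * a t.2.1 t.2.2) • (e t.1.1 * e t.1.2 * (e t.2.1 * e t.2.2))
      = ∑ i : Fin n, ∑ j ∈ Finset.Ioi i, ∑ k ∈ Finset.Ioi j, ∑ l ∈ Finset.Ioi k,
          (2 * (a i j * a k l + a i l * a j k - a i k * a j l)) • (e i * e j * e k * e l) := by
  classical
  set S0 := ((Pr n ×ˢ Pr n).filter (fun t => ¬ t.1 = t.2)).filter (fun t => dcond t) with hS0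
  set S6 := S0.filter (fun t => t.1.2 < t.2.1) with hS6
  set R1 := S0.filter (fun t => ¬ t.1.2 < t.2.1) with hR1
  set S1 := R1.filter (fun t => t.2.2 < t.1.1) with hS1
  set R2 := R1.filter (fun t => ¬ t.2.2 < t.1.1) with hR2
  set SA := R2.filter (fun t => t.1.1 < t.2.1) with hSA
  set SB := R2.filter (fun t => ¬ t.1.1 < t.2.1) with hSB
  set S5 := SA.filter (fun t => t.1.2 < t.2.2) with hS5
  set S4 := SA.filter (fun t => ¬ t.1.2 < t.2.2) with hS4
  set S3 := SB.filter (fun t => t.1.2 < t.2.2) with hS3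
  set S2 := SB.filter (fun t => ¬ t.1.2 < t.2.2) with hS2
  set Qd : Finset ((Fin n × Fin n) × Fin n × Fin n) :=
    Finset.univ.filter (fun t => t.1.1 < t.1.2 ∧ t.1.2 < t.2.1 ∧ t.2.1 < t.2.2) with hQd
  have split6 : ∑ t ∈ S0, (a t.1.1 t.1.2 * a t.2.1 t.2.2) • (e t.1.1 * e t.1.2 * (e t.2.1 * e t.2.2)) = ∑ t ∈ S6, (a t.1.1 t.1.2 * a t.2.1 t.2.2) • (e t.1.1 * e t.1.2 * (e t.2.1 * e t.2.2)) + ∑ t ∈ R1, (a t.1.1 t.1.2 * a t.2.1 t.2.2) • (e t.1.1 * e t.1.2 * (e t.2.1 * e t.2.2)) :=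
    (Finset.sum_filter_add_sum_filter_not S0 (fun t => t.1.2 < t.2.1) _).symm
  have split1 : ∑ t ∈ R1, (a t.1.1 t.1.2 * a t.2.1 t.2.2) • (e t.1.1 * e t.1.2 * (e t.2.1 * e t.2.2)) = ∑ t ∈ S1, (a t.1.1 t.1.2 * a t.2.1 t.2.2) • (e t.1.1 * e t.1.2 * (e t.2.1 * e t.2.2)) + ∑ t ∈ R2, (a t.1.1 t.1.2 * a t.2.1 t.2.2) • (e t.1.1 * e t.1.2 * (e t.2.1 * e t.2.2)) :=
    (Finset.sum_filter_add_sum_filter_not R1 (fun t => t.2.2 < t.1.1) _).symm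
  have splitA : ∑ t ∈ R2, (a t.1.1 t.1.2 * a t.2.1 t.2.2) • (e t.1.1 * e t.1.2 * (e t.2.1 * e t.2.2)) = ∑ t ∈ SA, (a t.1.1 t.1.2 * a t.2.1 t.2.2) • (e t.1.1 * e t.1.2 * (e t.2.1 * e t.2.2)) + ∑ t ∈ SB, (a t.1.1 t.1.2 * a t.2.1 t.2.2) • (e t.1.1 * e t.1.2 * (e t.2.1 * e t.2.2)) :=
    (Finset.sum_filter_add_sum_filter_not R2 (fun t => t.1.1 < t.2.1) _).symm
  have split5 : ∑ t ∈ SA, (a t.1.1 t.1.2 * a t.2.1 t.2.2) • (e t.1.1 * e t.1.2 * (e t.2.1 * e t.2.2)) = ∑ t ∈ S5, (a t.1.1 t.1.2 * a t.2.1 t.2.2) • (e t.1.1 * e t.1.2 * (e t.2.1 * e t.2.2)) + ∑ t ∈ S4, (a t.1.1 t.1.2 * a t.2.1 t.2.2) • (e t.1.1 * e t.1.2 * (e t.2.1 * e t.2.2)) :=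
    (Finset.sum_filter_add_sum_filter_not SA (fun t => t.1.2 < t.2.2) _).symm
  have split3 : ∑ t ∈ SB, (a t.1.1 t.1.2 * a t.2.1 t.2.2) • (e t.1.1 * e t.1.2 * (e t.2.1 * e t.2.2)) = ∑ t ∈ S3, (a t.1.1 t.1.2 * a t.2.1 t.2.2) • (e t.1.1 * e t.1.2 * (e t.2.1 * e t.2.2)) + ∑ t ∈ S2, (a t.1.1 t.1.2 * a t.2.1 t.2.2) • (e t.1.1 * e t.1.2 * (e t.2.1 * e t.2.2)) :=
    (Finset.sum_filter_add_sum_filter_not SB (fun t => t.1.2 < t.2.2) _).symm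
  have h6 : ∑ t ∈ S6, (a t.1.1 t.1.2 * a t.2.1 t.2.2) • (e t.1.1 * e t.1.2 * (e t.2.1 * e t.2.2))
      = ∑ u ∈ Qd, (a u.1.1 u.1.2 * a u.2.1 u.2.2) • (e u.1.1 * (e u.1.2 * (e u.2.1 * e u.2.2))) := by
    refine Finset.sum_nbij' (fun t => t) (fun u => u) ?_ ?_ ?_ ?_ ?_
    · intro x hx
      simp only [hS6, hR1, hS1, hR2, hSA, hSB, hS5, hS4, hS3, hS2, hS0, hQd, Finset.mem_filter, Finset.mem_product, Finset.mem_univ, true_and, Pr, dcond, ne_eq, Prod.ext_iff, not_and, Fin.lt_def, Fin.ext_iff] at hx ⊢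
      omega
    · intro u hu
      simp only [hS6, hR1, hS1, hR2, hSA, hSB, hS5, hS4, hS3, hS2, hS0, hQd, Finset.mem_filter, Finset.mem_product, Finset.mem_univ, true_and, Pr, dcond, ne_eq, Prod.ext_iff, not_and, Fin.lt_def, Fin.ext_iff] at hu ⊢
      omega
    · intro x _; rfl
    · intro u _; rfl
    · intro x hx
      simp only [hS6, hR1, hS1, hR2, hSA, hSB, hS5, hS4, hS3, hS2, hS0, hQd, Finset.mem_filter, Finset.mem_product, Finset.mem_univ, true_and, Pr, dcond, ne_eq, Prod.ext_iff, not_and, Fin.lt_def, Fin.ext_iff] at hx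
      simp only [mul_assoc]
  have h1 : ∑ t ∈ S1, (a t.1.1 t.1.2 * a t.2.1 t.2.2) • (e t.1.1 * e t.1.2 * (e t.2.1 * e t.2.2))
      = ∑ u ∈ Qd, (a u.2.1 u.2.2 * a u.1.1 u.1.2) • (e u.1.1 * (e u.1.2 * (e u.2.1 * e u.2.2))) := by
    refine Finset.sum_nbij' (fun t => (t.2, t.1)) (fun u => (u.2, u.1)) ?_ ?_ ?_ ?_ ?_
    · intro x hx
      simp only [hS6, hR1, hS1, hR2, hSA, hSB, hS5, hS4, hS3, hS2, hS0, hQd, Finset.mem_filter, Finset.mem_product, Finset.mem_univ, true_and, Pr, dcond, ne_eq, Prod.ext_iff, not_and, Fin.lt_def, Fin.ext_iff] at hx ⊢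
      omega
    · intro u hu
      simp only [hS6, hR1, hS1, hR2, hSA, hSB, hS5, hS4, hS3, hS2, hS0, hQd, Finset.mem_filter, Finset.mem_product, Finset.mem_univ, true_and, Pr, dcond, ne_eq, Prod.ext_iff, not_and, Fin.lt_def, Fin.ext_iff] at hu ⊢
      omega
    · intro x _; rfl
    · intro u _; rfl
    · intro x hx
      simp only [hS6, hR1, hS1, hR2, hSA, hSB, hS5, hS4, hS3, hS2, hS0, hQd, Finset.mem_filter, Finset.mem_product, Finset.mem_univ, true_and, Pr, dcond, ne_eq, Prod.ext_iff, not_and, Fin.lt_def, Fin.ext_iff] at hx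
      simp only [mul_assoc]
      rw [sgn_klij (Fin.ne_of_val_ne (by omega)) (Fin.ne_of_val_ne (by omega))
        (Fin.ne_of_val_ne (by omega)) (Fin.ne_of_val_ne (by omega))]
  have h5 : ∑ t ∈ S5, (a t.1.1 t.1.2 * a t.2.1 t.2.2) • (e t.1.1 * e t.1.2 * (e t.2.1 * e t.2.2))
      = ∑ u ∈ Qd, (-(a u.1.1 u.2.1 * a u.1.2 u.2.2)) • (e u.1.1 * (e u.1.2 * (e u.2.1 * e u.2.2))) := by
    refine Finset.sum_nbij' (fun t => ((t.1.1, t.2.1), (t.1.2, t.2.2))) (fun u => ((u.1.1, u.2.1), (u.1.2, u.2.2))) ?_ ?_ ?_ ?_ ?_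
    · intro x hx
      simp only [hS6, hR1, hS1, hR2, hSA, hSB, hS5, hS4, hS3, hS2, hS0, hQd, Finset.mem_filter, Finset.mem_product, Finset.mem_univ, true_and, Pr, dcond, ne_eq, Prod.ext_iff, not_and, Fin.lt_def, Fin.ext_iff] at hx ⊢
      omega
    · intro u hu
      simp only [hS6, hR1, hS1, hR2, hSA, hSB, hS5, hS4, hS3, hS2, hS0, hQd, Finset.mem_filter, Finset.mem_product, Finset.mem_univ, true_and, Pr, dcond, ne_eq, Prod.ext_iff, not_and, Fin.lt_def, Fin.ext_iff] at hu ⊢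
      omega
    · intro x _; rfl
    · intro u _; rfl
    · intro x hx
      simp only [hS6, hR1, hS1, hR2, hSA, hSB, hS5, hS4, hS3, hS2, hS0, hQd, Finset.mem_filter, Finset.mem_product, Finset.mem_univ, true_and, Pr, dcond, ne_eq, Prod.ext_iff, not_and, Fin.lt_def, Fin.ext_iff] at hx
      simp only [mul_assoc]
      rw [sgn_ikjl (Fin.ne_of_val_ne (by omega)), smul_neg, ← neg_smul]
  have h4 : ∑ t ∈ S4, (a t.1.1 t.1.2 * a t.2.1 t.2.2) • (e t.1.1 * e t.1.2 * (e t.2.1 * e t.2.2))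
      = ∑ u ∈ Qd, (a u.1.1 u.2.2 * a u.1.2 u.2.1) • (e u.1.1 * (e u.1.2 * (e u.2.1 * e u.2.2))) := by
    refine Finset.sum_nbij' (fun t => ((t.1.1, t.2.1), (t.2.2, t.1.2))) (fun u => ((u.1.1, u.2.2), (u.1.2, u.2.1))) ?_ ?_ ?_ ?_ ?_
    · intro x hx
      simp only [hS6, hR1, hS1, hR2, hSA, hSB, hS5, hS4, hS3, hS2, hS0, hQd, Finset.mem_filter, Finset.mem_product, Finset.mem_univ, true_and, Pr, dcond, ne_eq, Prod.ext_iff, not_and, Fin.lt_def, Fin.ext_iff] at hx ⊢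
      omega
    · intro u hu
      simp only [hS6, hR1, hS1, hR2, hSA, hSB, hS5, hS4, hS3, hS2, hS0, hQd, Finset.mem_filter, Finset.mem_product, Finset.mem_univ, true_and, Pr, dcond, ne_eq, Prod.ext_iff, not_and, Fin.lt_def, Fin.ext_iff] at hu ⊢
      omega
    · intro x _; rfl
    · intro u _; rfl
    · intro x hx
      simp only [hS6, hR1, hS1, hR2, hSA, hSB, hS5, hS4, hS3, hS2, hS0, hQd, Finset.mem_filter, Finset.mem_product, Finset.mem_univ, true_and, Pr, dcond, ne_eq, Prod.ext_iff, not_and, Fin.lt_def, Fin.ext_iff] at hx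
      simp only [mul_assoc]
      rw [sgn_iljk (Fin.ne_of_val_ne (by omega)) (Fin.ne_of_val_ne (by omega))]
  have h3 : ∑ t ∈ S3, (a t.1.1 t.1.2 * a t.2.1 t.2.2) • (e t.1.1 * e t.1.2 * (e t.2.1 * e t.2.2))
      = ∑ u ∈ Qd, (a u.1.2 u.2.1 * a u.1.1 u.2.2) • (e u.1.1 * (e u.1.2 * (e u.2.1 * e u.2.2))) := by
    refine Finset.sum_nbij' (fun t => ((t.2.1, t.1.1), (t.1.2, t.2.2))) (fun u => ((u.1.2, u.2.1), (u.1.1, u.2.2))) ?_ ?_ ?_ ?_ ?_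
    · intro x hx
      simp only [hS6, hR1, hS1, hR2, hSA, hSB, hS5, hS4, hS3, hS2, hS0, hQd, Finset.mem_filter, Finset.mem_product, Finset.mem_univ, true_and, Pr, dcond, ne_eq, Prod.ext_iff, not_and, Fin.lt_def, Fin.ext_iff] at hx ⊢
      omega
    · intro u hu
      simp only [hS6, hR1, hS1, hR2, hSA, hSB, hS5, hS4, hS3, hS2, hS0, hQd, Finset.mem_filter, Finset.mem_product, Finset.mem_univ, true_and, Pr, dcond, ne_eq, Prod.ext_iff, not_and, Fin.lt_def, Fin.ext_iff] at hu ⊢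
      omega
    · intro x _; rfl
    · intro u _; rfl
    · intro x hx
      simp only [hS6, hR1, hS1, hR2, hSA, hSB, hS5, hS4, hS3, hS2, hS0, hQd, Finset.mem_filter, Finset.mem_product, Finset.mem_univ, true_and, Pr, dcond, ne_eq, Prod.ext_iff, not_and, Fin.lt_def, Fin.ext_iff] at hx
      simp only [mul_assoc]
      rw [sgn_jkil (Fin.ne_of_val_ne (by omega)) (Fin.ne_of_val_ne (by omega))]
  have h2 : ∑ t ∈ S2, (a t.1.1 t.1.2 * a t.2.1 t.2.2) • (e t.1.1 * e t.1.2 * (e t.2.1 * e t.2.2))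
      = ∑ u ∈ Qd, (-(a u.1.2 u.2.2 * a u.1.1 u.2.1)) • (e u.1.1 * (e u.1.2 * (e u.2.1 * e u.2.2))) := by
    refine Finset.sum_nbij' (fun t => ((t.2.1, t.1.1), (t.2.2, t.1.2))) (fun u => ((u.1.2, u.2.2), (u.1.1, u.2.1))) ?_ ?_ ?_ ?_ ?_
    · intro x hx
      simp only [hS6, hR1, hS1, hR2, hSA, hSB, hS5, hS4, hS3, hS2, hS0, hQd, Finset.mem_filter, Finset.mem_product, Finset.mem_univ, true_and, Pr, dcond, ne_eq, Prod.ext_iff, not_and, Fin.lt_def, Fin.ext_iff] at hx ⊢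
      omega
    · intro u hu
      simp only [hS6, hR1, hS1, hR2, hSA, hSB, hS5, hS4, hS3, hS2, hS0, hQd, Finset.mem_filter, Finset.mem_product, Finset.mem_univ, true_and, Pr, dcond, ne_eq, Prod.ext_iff, not_and, Fin.lt_def, Fin.ext_iff] at hu ⊢
      omega
    · intro x _; rfl
    · intro u _; rfl
    · intro x hx
      simp only [hS6, hR1, hS1, hR2, hSA, hSB, hS5, hS4, hS3, hS2, hS0, hQd, Finset.mem_filter, Finset.mem_product, Finset.mem_univ, true_and, Pr, dcond, ne_eq, Prod.ext_iff, not_and, Fin.lt_def, Fin.ext_iff] at hx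
      simp only [mul_assoc]
      rw [sgn_jlik (Fin.ne_of_val_ne (by omega)) (Fin.ne_of_val_ne (by omega))
        (Fin.ne_of_val_ne (by omega)), smul_neg, ← neg_smul]
  rw [split6, split1, splitA, split5, split3, h6, h1, h5, h4, h3, h2,
    ← Finset.sum_add_distrib, ← Finset.sum_add_distrib, ← Finset.sum_add_distrib,
    ← Finset.sum_add_distrib, ← Finset.sum_add_distrib]
  have final : ∀ u ∈ Qd,
      (a u.1.1 u.1.2 * a u.2.1 u.2.2) • (e u.1.1 * (e u.1.2 * (e u.2.1 * e u.2.2)))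
        + ((a u.2.1 u.2.2 * a u.1.1 u.1.2) • (e u.1.1 * (e u.1.2 * (e u.2.1 * e u.2.2)))
        + (((-(a u.1.1 u.2.1 * a u.1.2 u.2.2)) • (e u.1.1 * (e u.1.2 * (e u.2.1 * e u.2.2)))
            + (a u.1.1 u.2.2 * a u.1.2 u.2.1) • (e u.1.1 * (e u.1.2 * (e u.2.1 * e u.2.2))))
          + ((a u.1.2 u.2.1 * a u.1.1 u.2.2) • (e u.1.1 * (e u.1.2 * (e u.2.1 * e u.2.2)))
            + (-(a u.1.2 u.2.2 * a u.1.1 u.2.1)) • (e u.1.1 * (e u.1.2 * (e u.2.1 * e u.2.2))))))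
      = (2 * (a u.1.1 u.1.2 * a u.2.1 u.2.2 + a u.1.1 u.2.2 * a u.1.2 u.2.1
          - a u.1.1 u.2.1 * a u.1.2 u.2.2)) • (e u.1.1 * e u.1.2 * (e u.2.1 * e u.2.2)) := by
    intro u _
    simp only [mul_assoc, ← add_smul]
    congr 1
    ring
  rw [Finset.sum_congr rfl final]
  have := sum_quads (n := n) (fun i j k l =>
    (2 * (a i j * a k l + a i l * a j k - a i k * a j l)) • (e i * e j * e k * e l))
  rw [hQd]
  convert this using 2 with u
  simp only [mul_assoc]

end main

/-- **Lemma (dx²).** For `w = ∑_{i<j} (a i j) • (eᵢ * eⱼ)` in `Cl_n` one has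
`w * w = (-(∑_{i<j} (a i j)²)) • 1
  + ∑_{i<j<k<l} (2 * (a i j * a k l + a i l * a j k - a i k * a j l)) • (eᵢ * eⱼ * e_k * e_l)`. -/
theorem clifford_two_form_square (n : ℕ) (a : Fin n → Fin n → ℝ)
    (w : CliffordAlgebra (Q n))
    (hw : w = ∑ i : Fin n, ∑ j ∈ Finset.Ioi i, a i j • (e i * e j)) :
    w * w
      = (-(∑ i : Fin n, ∑ j ∈ Finset.Ioi i, (a i j) ^ 2)) • (1 : CliffordAlgebra (Q n))
        + ∑ i : Fin n, ∑ j ∈ Finset.Ioi i, ∑ k ∈ Finset.Ioi j, ∑ l ∈ Finset.Ioi k,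
            (2 * (a i j * a k l + a i l * a j k - a i k * a j l)) • (e i * e j * e k * e l) := by
  have hw2 : w * w = ∑ t ∈ Pr n ×ˢ Pr n,
      (a t.1.1 t.1.2 * a t.2.1 t.2.2) • (e t.1.1 * e t.1.2 * (e t.2.1 * e t.2.2)) := by
    rw [hw, ← sum_pairs (fun i j => a i j • (e i * e j)), Finset.sum_mul_sum,
      ← Finset.sum_product']
    exact Finset.sum_congr rfl fun t _ => smul_mul_smul_comm _ _ _ _
  rw [hw2,
    ← Finset.sum_filter_add_sum_filter_not (Pr n ×ˢ Pr n) (fun t => t.1 = t.2),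
    ← Finset.sum_filter_add_sum_filter_not
        ((Pr n ×ˢ Pr n).filter (fun t => ¬ t.1 = t.2)) (fun t => dcond t),
    diag_part a, disjoint_part a, share_part a, add_zero]
end

section
/- Let n ∈ ℕ and let a, b : Fin n → Fin n → ℝ be skew-symmetric in their two indices (a i j = -a j i and b i j = -b j i for all i, j). In Cl_n set A = ∑_{i<j} (a i j) • (eᵢ * eⱼ), B = ∑_{i<j} (b i j) • (eᵢ * eⱼ), and for each k ∈ Fin n set α_k = ∑_q (a k q) • e_q and β_k = ∑_q (b k q) • e_q. Then A * B - B * A = ∑_k (α_k * β_k - β_k * α_k). (This is the coordinate form of the identity deⁱ·β - β·deⁱ = 2 ∑_k ι(e_k)deⁱ ∧ ι(e_k)β for 2-forms acting by Clifford multiplication, proved inside Lemma 'dxidxj' of the paper.) -/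
open scoped BigOperators

/-!
Commutation with `A` is a derivation of `Cl_n`, and the anticommutation relations give
`⁅eᵢ eⱼ, e_q⁆ = 2 (δ_iq eⱼ - δ_jq eᵢ)`, so by skew-symmetry `⁅A, e_q⁆ = 2 α_q`. Writing
`2 B = ∑_{k,l} b_kl e_k e_l`, the Leibniz rule gives `2 ⁅A, B⁆ = 2 ∑_{k,l} b_kl (α_k e_l + e_k α_l)`,
and `∑_k b_kl e_k = -β_l` turns this into `2 ∑_k (α_k β_k - β_k α_k)`.
-/

attribute [local instance] LieRing.ofAssociativeRing

theorem Finset.sum_sum_eq_two_nsmul_sum_sum_Ioi {ι M : Type*} [LinearOrder ι] [Fintype ι]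
    [LocallyFiniteOrderTop ι] [LocallyFiniteOrderBot ι] [AddCommMonoid M] (f : ι → ι → M)
    (hsymm : ∀ i j, f i j = f j i) (hdiag : ∀ i, f i i = 0) :
    ∑ i, ∑ j, f i j = 2 • ∑ i, ∑ j ∈ Ioi i, f i j := by
  have hsplit : ∀ i, ∑ j, f i j = ∑ j ∈ Iio i, f i j + ∑ j ∈ Ioi i, f i j := by
    intro i
    rw [← sum_filter_add_sum_filter_not univ (· < i), filter_gt_eq_Iio,
      show univ.filter (fun j => ¬j < i) = Ici i by ext; simp, ← add_sum_Ioi_eq_sum_Ici, hdiag,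
      zero_add]
  have hswap : ∑ i, ∑ j ∈ Iio i, f i j = ∑ i, ∑ j ∈ Ioi i, f i j := by
    rw [sum_comm' (t' := univ) (s' := fun j => Ioi j) (by simp)]
    simp only [hsymm]
  rw [sum_congr rfl fun i _ => hsplit i, sum_add_distrib, hswap, two_nsmul]

theorem Ring.lie_mul_right {A : Type*} [Ring A] (x y z : A) :
    ⁅x, y * z⁆ = ⁅x, y⁆ * z + y * ⁅x, z⁆ := by
  simp only [Ring.lie_def]
  noncomm_ring

theorem CliffordAlgebra.lie_ι_mul_ι_ι {R M : Type*} [CommRing R] [AddCommGroup M] [Module R M]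
    (Q : QuadraticForm R M) (x y v : M) :
    ⁅ι Q x * ι Q y, ι Q v⁆ =
      QuadraticMap.polar Q v y • ι Q x - QuadraticMap.polar Q x v • ι Q y := by
  calc ⁅ι Q x * ι Q y, ι Q v⁆
      = ι Q x * (ι Q y * ι Q v + ι Q v * ι Q y) - (ι Q x * ι Q v + ι Q v * ι Q x) * ι Q y := by
        rw [Ring.lie_def]; noncomm_ring
    _ = _ := by
        rw [ι_mul_ι_add_swap, ι_mul_ι_add_swap, QuadraticMap.polar_comm Q y v,
          ← Algebra.commutes, Algebra.smul_def, Algebra.smul_def]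

section
variable {n : ℕ}

open QuadraticMap in
theorem polar_Q (u w : EuclideanSpace ℝ (Fin n)) :
    polar (Q n) u w = -(2 * ∑ k, u k * w k) := by
  show polar (fun v : EuclideanSpace ℝ (Fin n) => -∑ k, v k ^ 2) u w = _
  simp only [polar, PiLp.add_apply, add_sq, Finset.sum_add_distrib, Finset.mul_sum]
  ring_nf

open QuadraticMap in
theorem polar_Q_single (i j : Fin n) :
    polar (Q n) (EuclideanSpace.single i 1) (EuclideanSpace.single j 1) =
      if i = j then -2 else 0 := by
  simp [polar_Q, PiLp.single_apply, eq_comm, apply_ite]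

theorem e_mul_e_add_swap (i j : Fin n) :
    e i * e j + e j * e i = algebraMap ℝ _ (if i = j then -2 else 0) := by
  rw [e, e, CliffordAlgebra.ι_mul_ι_add_swap, polar_Q_single]

theorem e_mul_e_of_ne {i j : Fin n} (h : i ≠ j) : e i * e j = -(e j * e i) := by
  simpa [h, add_eq_zero_iff_eq_neg] using e_mul_e_add_swap i j

theorem lie_e_mul_e_e (i j q : Fin n) :
    ⁅e i * e j, e q⁆ = (2 : ℝ) • ((if i = q then e j else 0) - if j = q then e i else 0) := by
  rw [e, e, e, CliffordAlgebra.lie_ι_mul_ι_ι, polar_Q_single, polar_Q_single]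
  split_ifs <;> subst_vars <;> simp_all

noncomputable def twoForm (a : Fin n → Fin n → ℝ) : CliffordAlgebra (Q n) :=
  ∑ i, ∑ j ∈ Finset.Ioi i, a i j • (e i * e j)

noncomputable def contraction (a : Fin n → Fin n → ℝ) (k : Fin n) : CliffordAlgebra (Q n) :=
  ∑ q, a k q • e q

variable {a b : Fin n → Fin n → ℝ}

theorem two_smul_twoForm (ha : ∀ i j, a i j = -a j i) :
    (2 : ℝ) • twoForm a = ∑ i, ∑ j, a i j • (e i * e j) := by
  have hdiag : ∀ i, a i i = 0 := fun i => by linarith [ha i i]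
  rw [Finset.sum_sum_eq_two_nsmul_sum_sum_Ioi, ofNat_smul_eq_nsmul, twoForm]
  · intro i j
    obtain rfl | h := eq_or_ne i j
    · rfl
    · rw [e_mul_e_of_ne h, ha, smul_neg, neg_smul, neg_neg]
  · intro i
    rw [hdiag, zero_smul]

theorem lie_twoForm_e (ha : ∀ i j, a i j = -a j i) (q : Fin n) :
    ⁅twoForm a, e q⁆ = (2 : ℝ) • contraction a q := by
  refine smul_right_injective _ (two_ne_zero : (2 : ℝ) ≠ 0) ?_
  dsimp only
  rw [← smul_lie, two_smul_twoForm ha]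
  simp only [sum_lie, smul_lie, lie_e_mul_e_e, smul_sub, smul_ite, smul_zero,
    Finset.sum_sub_distrib, Finset.sum_ite_irrel, Finset.sum_const_zero, Finset.sum_ite_eq',
    Finset.mem_univ, if_true]
  rw [contraction, ← Finset.sum_sub_distrib, Finset.smul_sum, Finset.smul_sum]
  refine Finset.sum_congr rfl fun x _ => ?_
  rw [ha x q]
  module

theorem sum_smul_e_eq_neg_contraction (hb : ∀ i j, b i j = -b j i) (l : Fin n) :
    ∑ k, b k l • e k = -contraction b l := by
  simp only [contraction, ← Finset.sum_neg_distrib, ← neg_smul, ← hb]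

theorem lie_twoForm_twoForm (ha : ∀ i j, a i j = -a j i) (hb : ∀ i j, b i j = -b j i) :
    ⁅twoForm a, twoForm b⁆ = ∑ k, ⁅contraction a k, contraction b k⁆ := by
  refine smul_right_injective _ (two_ne_zero : (2 : ℝ) ≠ 0) ?_
  have hleft : ∑ k, ∑ l, b k l • (contraction a k * e l) =
      ∑ k, contraction a k * contraction b k := by
    simp only [contraction, Finset.mul_sum, mul_smul_comm]
  have hright : ∑ k, ∑ l, b k l • (e k * contraction a l) =
      -∑ l, contraction b l * contraction a l := by
    rw [Finset.sum_comm, ← Finset.sum_neg_distrib]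
    refine Finset.sum_congr rfl fun l _ => ?_
    rw [← neg_mul, ← sum_smul_e_eq_neg_contraction hb, Finset.sum_mul]
    simp only [smul_mul_assoc]
  calc (2 : ℝ) • ⁅twoForm a, twoForm b⁆
      = ∑ k, ∑ l, b k l • ⁅twoForm a, e k * e l⁆ := by
        simp only [← lie_smul, two_smul_twoForm hb, lie_sum]
    _ = (2 : ℝ) • ∑ k, ∑ l,
          (b k l • (contraction a k * e l) + b k l • (e k * contraction a l)) := by
        simp only [Ring.lie_mul_right, lie_twoForm_e ha, smul_mul_assoc, mul_smul_comm,
          Finset.smul_sum, smul_add, smul_comm (b _ _) (2 : ℝ)]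
    _ = (2 : ℝ) • ∑ k, ⁅contraction a k, contraction b k⁆ := by
        rw [Finset.sum_congr rfl fun k _ => Finset.sum_add_distrib, Finset.sum_add_distrib, hleft,
          hright]
        simp only [Ring.lie_def, sub_eq_add_neg, Finset.sum_add_distrib, Finset.sum_neg_distrib]

end

/-- **Commutator identity inside Lemma (dxidxj).** For skew-symmetric coefficient matrices
`a`, `b`, with `A = ∑_{i<j} (a i j) • (eᵢ*eⱼ)`, `B = ∑_{i<j} (b i j) • (eᵢ*eⱼ)`,
`α_k = ∑_q (a k q) • e_q`, `β_k = ∑_q (b k q) • e_q`, one has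
`A*B - B*A = ∑_k (α_k * β_k - β_k * α_k)`. -/
theorem clifford_two_form_commutator (n : ℕ) (a b : Fin n → Fin n → ℝ)
    (ha : ∀ i j : Fin n, a i j = -a j i) (hb : ∀ i j : Fin n, b i j = -b j i)
    (A B : CliffordAlgebra (Q n)) (α β : Fin n → CliffordAlgebra (Q n))
    (hA : A = ∑ i : Fin n, ∑ j ∈ Finset.Ioi i, a i j • (e i * e j))
    (hB : B = ∑ i : Fin n, ∑ j ∈ Finset.Ioi i, b i j • (e i * e j))
    (hα : ∀ k : Fin n, α k = ∑ q : Fin n, a k q • e q)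
    (hβ : ∀ k : Fin n, β k = ∑ q : Fin n, b k q • e q) :
    A * B - B * A = ∑ k : Fin n, (α k * β k - β k * α k) := by
  obtain rfl : A = twoForm a := hA
  obtain rfl : B = twoForm b := hB
  obtain rfl : α = contraction a := funext hα
  obtain rfl : β = contraction b := funext hβ
  simpa only [Ring.lie_def] using lie_twoForm_twoForm ha hb
end
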